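/- arXiv:2605.00138 — 7 statements merged into one kernel-verified Lean document; each statement's English description precedes it below -/
import Mathlib

section
/- Let B be a commutative K-algebra over a field K of characteristic zero and ∂ a locally nilpotent K-derivation on B. Then Ker(∂) is integrally closed in B whenever B is a domain; in particular, if b ∈ B and b^n ∈ Ker(∂) for some n ≥ 1, then b ∈ Ker(∂). -/
/-!
If `b` is a root of a monic `p` with coefficients killed by `D`, then
`D (p⁽ᵏ⁾ b) = p⁽ᵏ⁺¹⁾ b * D b`. So if `D b ≠ 0`, every derivative of `p` vanishes at `b`, as `B`
is a domain; but the `(deg p)`-th derivative of `p` is the constant `(deg p)!`, nonzero in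
characteristic zero. The second claim follows since `b ^ n ∈ Ker D` makes `b` integral over
`Ker D`.
-/

/-- The kernel of a derivation, as a subring of `B`. -/
def Derivation.kerSubring {K B : Type*} [CommRing K] [CommRing B] [Algebra K B]
    (D : Derivation K B B) : Subring B where
  carrier := {b | D b = 0}
  zero_mem' := by simp
  one_mem' := by simp
  add_mem' {a b} ha hb := by simp_all
  neg_mem' {a} ha := by simp_all
  mul_mem' {a b} ha hb := by
    simp only [Set.mem_setOf_eq, Derivation.leibniz, smul_eq_mul] at *
    rw [ha, hb]; ring

open Polynomial

theorem Polynomial.iterate_derivative_natDegree {R : Type*} [Semiring R] (p : R[X]) :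
    derivative^[p.natDegree] p = C (p.natDegree.factorial • p.leadingCoeff) := by
  have hdeg := (natDegree_iterate_derivative p p.natDegree).trans_eq p.natDegree.sub_self
  rw [eq_C_of_natDegree_le_zero hdeg, coeff_iterate_derivative, zero_add, Nat.descFactorial_self,
    leadingCoeff]

namespace Derivation

variable {R B : Type*} [CommRing R] [CommRing B] [Algebra R B]

theorem aeval_iterate_derivative_eq_zero [IsDomain B] (D : Derivation R B B) {b : B}
    (hDb : D b ≠ 0) {p : R[X]} (hp : aeval b p = 0) (k : ℕ) :
    aeval b (derivative^[k] p) = 0 := by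
  induction k with
  | zero => exact hp
  | succ k ih =>
    have h := D.map_aeval (derivative^[k] p) b
    rw [ih, map_zero, smul_eq_mul, eq_comm, mul_eq_zero,
      ← Function.iterate_succ_apply' derivative] at h
    exact h.resolve_right hDb

theorem apply_eq_zero_of_isIntegral [IsDomain B] [CharZero B] (D : Derivation R B B) {b : B}
    (hb : IsIntegral R b) : D b = 0 := by
  obtain ⟨p, hmonic, hp⟩ := hb
  by_contra hDb
  have h := D.aeval_iterate_derivative_eq_zero hDb hp p.natDegree
  rw [p.iterate_derivative_natDegree, hmonic.leadingCoeff, aeval_C, map_nsmul, map_one,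
    nsmul_one] at h
  exact Nat.cast_ne_zero.mpr p.natDegree.factorial_ne_zero h

def overKerSubring (D : Derivation R B B) : Derivation D.kerSubring B B where
  toFun := D
  map_add' := D.map_add
  map_smul' a x := by
    have ha : D a = 0 := a.2
    simp only [Subring.smul_def, smul_eq_mul, RingHom.id_apply, D.leibniz, ha, mul_zero,
      add_zero]
  map_one_eq_zero' := D.map_one_eq_zero
  leibniz' := D.leibniz

end Derivation

theorem lnd_kernel_integrally_closed_general {K B : Type*} [Field K] [CharZero K] [CommRing B]
    [IsDomain B] [Algebra K B]
    (D : Derivation K B B) :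
    (∀ b : B, IsIntegral (D.kerSubring) b → D b = 0) ∧
    (∀ (b : B) (n : ℕ), 1 ≤ n → D (b ^ n) = 0 → D b = 0) := by
  have : CharZero B := charZero_of_injective_algebraMap (algebraMap K B).injective
  have hclosed (b : B) (hb : IsIntegral D.kerSubring b) : D b = 0 :=
    D.overKerSubring.apply_eq_zero_of_isIntegral hb
  refine ⟨hclosed, fun b n hn hbn => hclosed b (IsIntegral.of_pow hn ?_)⟩
  exact isIntegral_algebraMap (x := (⟨b ^ n, hbn⟩ : D.kerSubring))

/-- For a locally nilpotent `K`-derivation `D` on a domain `B` over a field `K`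
of characteristic zero, `Ker D` is integrally closed in `B`; in particular, if `b ^ n ∈ Ker D`
for some `n ≥ 1`, then `b ∈ Ker D`. -/
theorem lnd_kernel_integrally_closed {K B : Type*} [Field K] [CharZero K] [CommRing B]
    [IsDomain B] [Algebra K B]
    (D : Derivation K B B) (hLN : ∀ b : B, ∃ n : ℕ, (⇑D)^[n] b = 0) :
    (∀ b : B, IsIntegral (D.kerSubring) b → D b = 0) ∧
    (∀ (b : B) (n : ℕ), 1 ≤ n → D (b ^ n) = 0 → D b = 0) :=
  lnd_kernel_integrally_closed_general D
end

section
/- Let K be a field of characteristic zero and ∂ = y ∂/∂x + z ∂/∂y on K[x,y,z]. Then the plinth ideal pl(∂) = Ker(∂) ∩ Im(∂) equals the principal ideal of Ker(∂) = K[z, y²−2xz] generated by z. -/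
open MvPolynomial

/-!
Put `f = 2x ∂/∂y + 2y ∂/∂z`. Then `[∂, f] = 2z ∂/∂z - 2x ∂/∂x` acts on a polynomial that is
homogeneous for the grading `x ↦ -2, y ↦ 0, z ↦ 2` (refined by total degree) as multiplication
by its weight `m`, so `∂` and `f` make each total degree into a representation of `sl₂` with
weights bounded below. In such a representation `e f^{n+1} v = f^{n+1} e v + (n+1)(m-n) f^n v`
for `v` of weight `m`, and since `f` is locally nilpotent, descending induction on `n` shows that
`Ker e ∩ Im e` has no component of weight `m ≤ 0`. A homogeneous component of positive weight has
more factors `z` than `x` in each monomial, so it is divisible by `z`; conversely `z k = ∂ (y k)`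
for `k ∈ Ker ∂`.
-/

/-- The derivation `y ∂/∂x + z ∂/∂y` on `K[x,y,z]`, where `x = X 0`, `y = X 1`, `z = X 2`. -/
noncomputable def parabolicDerivation (K : Type*) [CommRing K] :
    Derivation K (MvPolynomial (Fin 3) K) (MvPolynomial (Fin 3) K) :=
  MvPolynomial.mkDerivation K ![X 1, X 2, 0]

namespace MvPolynomial

variable {R σ M : Type*} [CommSemiring R]

theorem derivation_apply_eq_sum_mul_pderiv [Fintype σ]
    (D : Derivation R (MvPolynomial σ R) (MvPolynomial σ R)) (p : MvPolynomial σ R) :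
    D p = ∑ i, D (X i) * pderiv i p := by
  classical
  induction p using MvPolynomial.induction_on with
  | C a => simp
  | add p q hp hq => simp only [map_add, hp, hq, mul_add, Finset.sum_add_distrib]
  | mul_X p j hp =>
    simp only [Derivation.leibniz, hp, smul_eq_mul, mul_add, Finset.sum_add_distrib]
    simp [pderiv_X, Pi.single_apply, Finset.mul_sum, mul_left_comm, mul_comm]

theorem IsWeightedHomogeneous.sum_smul_X_mul_pderiv [Fintype σ] [AddCommMonoid M]
    {w : σ → M} (φ : M →+ R) {p : MvPolynomial σ R} {n : M}
    (h : IsWeightedHomogeneous w p n) :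
    ∑ i, φ (w i) • (X i * pderiv i p) = φ n • p := by
  rw [← mem_weightedHomogeneousSubmodule, weightedHomogeneousSubmodule_eq_finsupp_supported,
    AddMonoidAlgebra.supported_eq_span_single] at h
  refine Submodule.span_induction ?_ ?_ (fun p q _ _ hp hq ↦ ?_) (fun r p _ h ↦ ?_) h
  · rintro _ ⟨s, hs, rfl⟩
    rw [Set.mem_ofPred, Finsupp.weight_apply,
      Finsupp.sum_fintype _ _ fun i => zero_smul ℕ (w i)] at hs
    simp_rw [single_eq_monomial, X_mul_pderiv_monomial, ← hs, map_sum, map_nsmul,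
      Finset.sum_smul, smul_comm (φ _), smul_assoc]
  · simp
  · simp_rw [map_add, mul_add, smul_add, Finset.sum_add_distrib, hp, hq]
  · simp_rw [(pderiv _).map_smul, mul_smul_comm, smul_comm (φ _) r, ← Finset.smul_sum, h]

theorem derivation_apply_eq_smul_of_isWeightedHomogeneous [Fintype σ] [AddCommMonoid M]
    {w : σ → M} (φ : M →+ R) {D : Derivation R (MvPolynomial σ R) (MvPolynomial σ R)}
    (hD : ∀ i, D (X i) = φ (w i) • X i) {p : MvPolynomial σ R} {n : M}
    (hp : IsWeightedHomogeneous w p n) :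
    D p = φ n • p := by
  rw [derivation_apply_eq_sum_mul_pderiv, ← hp.sum_smul_X_mul_pderiv φ]
  simp_rw [hD, smul_mul_assoc]

theorem IsWeightedHomogeneous.derivation_apply [Fintype σ] [AddCommGroup M] {w : σ → M} {k : M}
    {D : Derivation R (MvPolynomial σ R) (MvPolynomial σ R)}
    (hD : ∀ i, IsWeightedHomogeneous w (D (X i)) (w i + k)) {p : MvPolynomial σ R} {n : M}
    (hp : IsWeightedHomogeneous w p n) :
    IsWeightedHomogeneous w (D p) (n + k) := by
  rw [derivation_apply_eq_sum_mul_pderiv]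
  refine IsWeightedHomogeneous.sum _ _ _ fun i _ => ?_
  convert (hD i).mul (hp.pderiv (sub_add_cancel n (w i))) using 1
  abel

theorem weightedHomogeneousComponent_add_apply [AddCancelCommMonoid M] {w : σ → M} {k : M}
    (L : MvPolynomial σ R →ₗ[R] MvPolynomial σ R)
    (hL : ∀ {p n}, IsWeightedHomogeneous w p n → IsWeightedHomogeneous w (L p) (n + k))
    (p : MvPolynomial σ R) (n : M) :
    weightedHomogeneousComponent w (n + k) (L p) = L (weightedHomogeneousComponent w n p) := by
  classical
  conv_lhs => rw [← sum_weightedHomogeneousComponent w p]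
  have hLj (j : M) := hL (weightedHomogeneousComponent_isWeightedHomogeneous (w := w) j p)
  rw [finsum_eq_sum _ (weightedHomogeneousComponent_finsupp p), map_sum, map_sum,
    Finset.sum_eq_single n]
  · exact (hLj n).weightedHomogeneousComponent_same
  · exact fun j _ hj =>
      (hLj j).weightedHomogeneousComponent_ne _ fun h => hj (add_right_cancel h).symm
  · intro hn
    have hzero : weightedHomogeneousComponent w n p = 0 := by
      by_contra h
      exact hn ((Set.Finite.mem_toFinset (weightedHomogeneousComponent_finsupp p)).mpr h)
    rw [hzero, map_zero, map_zero]

end MvPolynomial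

theorem Module.End.pow_apply_eq_zero_of_forall_pow_succ {K V : Type*} [Semiring K]
    [AddCommMonoid V] [Module K V] {f : Module.End K V} {v : V} {k n₀ : ℕ}
    (hk : (f ^ k) v = 0) (hstep : ∀ n ≥ n₀, (f ^ (n + 1)) v = 0 → (f ^ n) v = 0) :
    (f ^ n₀) v = 0 := by
  have descend : ∀ j, (f ^ (n₀ + j)) v = 0 → (f ^ n₀) v = 0 := by
    intro j
    induction j with
    | zero => exact id
    | succ j ih => exact fun h => ih (hstep _ (Nat.le_add_right _ _) h)
  exact descend k (by rw [pow_add, Module.End.mul_apply, hk, map_zero])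

/-- `W m` plays the role of the `m`-weight space of `h = [e, f]` in a representation of `sl₂`
whose weights are bounded below. -/
structure IsSl2WeightGrading {K V : Type*} [CommRing K] [AddCommGroup V] [Module K V]
    (e f : Module.End K V) (W : ℤ → Submodule K V) : Prop where
  apply_e_mem {m : ℤ} {v : V} : v ∈ W m → e v ∈ W (m + 2)
  apply_f_mem {m : ℤ} {v : V} : v ∈ W m → f v ∈ W (m - 2)
  lie_apply {m : ℤ} {v : V} : v ∈ W m → e (f v) - f (e v) = (m : K) • v
  exists_forall_lt_eq_bot : ∃ N, ∀ m < N, W m = ⊥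

namespace IsSl2WeightGrading

variable {K V : Type*} [CommRing K] [AddCommGroup V] [Module K V] {e f : Module.End K V}
  {W : ℤ → Submodule K V}

theorem pow_apply_mem (hW : IsSl2WeightGrading e f W) {m : ℤ} {v : V} (hv : v ∈ W m) (k : ℕ) :
    (f ^ k) v ∈ W (m - 2 * k) := by
  induction k with
  | zero => simpa using hv
  | succ k ih =>
    rw [pow_succ', Module.End.mul_apply]
    convert hW.apply_f_mem ih using 2
    push_cast
    ring

theorem exists_pow_apply_eq_zero (hW : IsSl2WeightGrading e f W) {m : ℤ} {v : V}
    (hv : v ∈ W m) : ∃ k : ℕ, (f ^ k) v = 0 := by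
  obtain ⟨N, hN⟩ := hW.exists_forall_lt_eq_bot
  refine ⟨(m - N).toNat + 1, ?_⟩
  have hmem := hW.pow_apply_mem hv ((m - N).toNat + 1)
  rwa [hN _ (by omega), Submodule.mem_bot] at hmem

theorem apply_pow_succ_apply (hW : IsSl2WeightGrading e f W) {m : ℤ} {v : V} (hv : v ∈ W m)
    (n : ℕ) :
    e ((f ^ (n + 1)) v)
      = (f ^ (n + 1)) (e v) + ((((n : ℤ) + 1) * (m - n) : ℤ) : K) • (f ^ n) v := by
  induction n generalizing m v with
  | zero => simpa [sub_eq_iff_eq_add'] using hW.lie_apply hv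
  | succ n ih =>
    have hlie : e (f v) = f (e v) + (m : K) • v := sub_eq_iff_eq_add'.mp (hW.lie_apply hv)
    have hshift : ∀ k w, (f ^ k) (f w) = (f ^ (k + 1)) w := fun k w => by
      rw [pow_succ, Module.End.mul_apply]
    calc e ((f ^ (n + 1 + 1)) v)
        = e ((f ^ (n + 1)) (f v)) := by rw [hshift]
      _ = (f ^ (n + 1)) (f (e v) + (m : K) • v)
            + ((((n : ℤ) + 1) * (m - 2 - n) : ℤ) : K) • (f ^ n) (f v) := by
        rw [ih (hW.apply_f_mem hv), hlie]
      _ = (f ^ (n + 1 + 1)) (e v)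
            + (((((n + 1 : ℕ) : ℤ) + 1) * (m - (n + 1 : ℕ)) : ℤ) : K) • (f ^ (n + 1)) v := by
        rw [map_add, map_smul, hshift, hshift, add_assoc, ← add_smul]
        congr 2
        push_cast
        ring

variable [IsDomain K] [CharZero K] [Module.IsTorsionFree K V]

theorem pow_apply_eq_zero_of_pow_succ (hW : IsSl2WeightGrading e f W) {m : ℤ} {v : V}
    (hv : v ∈ W m) {n : ℕ} (hn : (n : ℤ) ≠ m) (h : (f ^ (n + 1)) v = 0)
    (he : (f ^ (n + 1)) (e v) = 0) : (f ^ n) v = 0 := by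
  have key := hW.apply_pow_succ_apply hv n
  rw [h, he, map_zero, zero_add, eq_comm, smul_eq_zero] at key
  exact key.resolve_left (Int.cast_ne_zero.mpr (mul_ne_zero (by omega) (by omega)))

theorem eq_zero_of_neg (hW : IsSl2WeightGrading e f W) {m : ℤ} {v : V} (hv : v ∈ W m)
    (hm : m < 0) (he : e v = 0) : v = 0 := by
  obtain ⟨k, hk⟩ := hW.exists_pow_apply_eq_zero hv
  simpa using Module.End.pow_apply_eq_zero_of_forall_pow_succ (n₀ := 0) hk fun n _ h =>
    hW.pow_apply_eq_zero_of_pow_succ hv (by omega) h (by rw [he, map_zero])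

theorem f_apply_eq_zero_of_weight_zero (hW : IsSl2WeightGrading e f W) {v : V} (hv : v ∈ W 0)
    (he : e v = 0) : f v = 0 := by
  obtain ⟨k, hk⟩ := hW.exists_pow_apply_eq_zero hv
  simpa using Module.End.pow_apply_eq_zero_of_forall_pow_succ (n₀ := 1) hk fun n hn h =>
    hW.pow_apply_eq_zero_of_pow_succ hv (by omega) h (by rw [he, map_zero])

theorem apply_eq_zero_of_nonpos (hW : IsSl2WeightGrading e f W) {m : ℤ} {u : V}
    (hu : u ∈ W (m - 2)) (hm : m ≤ 0) (he : e (e u) = 0) : e u = 0 := by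
  have heu : e u ∈ W m := by simpa using hW.apply_e_mem hu
  rcases hm.lt_or_eq with hm | rfl
  · exact hW.eq_zero_of_neg heu hm he
  · have hf : f (e u) = 0 := hW.f_apply_eq_zero_of_weight_zero heu he
    obtain ⟨k, hk⟩ := hW.exists_pow_apply_eq_zero hu
    have hu0 : u = 0 := by
      simpa using Module.End.pow_apply_eq_zero_of_forall_pow_succ (n₀ := 0) hk fun n _ h =>
        hW.pow_apply_eq_zero_of_pow_succ hu (by omega) h
          (by rw [pow_succ, Module.End.mul_apply, hf, map_zero])
    rw [hu0, map_zero]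

end IsSl2WeightGrading

/-- The weight of `x`, `y`, `z`: the `sl₂`-weight, then the total degree. -/
def parabolicWeight : Fin 3 → ℤ × ℤ := ![(-2, 1), (0, 1), (2, 1)]

noncomputable def parabolicLowering (K : Type*) [CommRing K] :
    Derivation K (MvPolynomial (Fin 3) K) (MvPolynomial (Fin 3) K) :=
  mkDerivation K ![0, C 2 * X 0, C 2 * X 1]

theorem weight_parabolicWeight (s : Fin 3 →₀ ℕ) :
    Finsupp.weight parabolicWeight s = (2 * (s 2 : ℤ) - 2 * s 0, (s 0 : ℤ) + s 1 + s 2) := by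
  rw [Finsupp.weight_apply, Finsupp.sum_fintype _ _ (by simp), Fin.sum_univ_three]
  simp [parabolicWeight]
  ring

section CommRing

variable {K : Type*} [CommRing K]

@[simp]
theorem parabolicDerivation_X (i : Fin 3) :
    parabolicDerivation K (X i) = ![X 1, X 2, 0] i :=
  mkDerivation_X _ _ _

@[simp]
theorem parabolicLowering_X (i : Fin 3) :
    parabolicLowering K (X i) = ![0, C 2 * X 0, C 2 * X 1] i :=
  mkDerivation_X _ _ _

theorem isWeightedHomogeneous_parabolicDerivation {p : MvPolynomial (Fin 3) K} {m d : ℤ}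
    (hp : IsWeightedHomogeneous parabolicWeight p (m, d)) :
    IsWeightedHomogeneous parabolicWeight (parabolicDerivation K p) (m + 2, d) := by
  have hX : ∀ i, IsWeightedHomogeneous parabolicWeight (parabolicDerivation K (X i))
      (parabolicWeight i + (2, 0)) := by
    intro i
    rw [parabolicDerivation_X]
    fin_cases i
    · exact isWeightedHomogeneous_X K parabolicWeight 1
    · exact isWeightedHomogeneous_X K parabolicWeight 2
    · exact isWeightedHomogeneous_zero K parabolicWeight _
  simpa using hp.derivation_apply hX

theorem isWeightedHomogeneous_parabolicLowering {p : MvPolynomial (Fin 3) K} {m d : ℤ}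
    (hp : IsWeightedHomogeneous parabolicWeight p (m, d)) :
    IsWeightedHomogeneous parabolicWeight (parabolicLowering K p) (m - 2, d) := by
  have hX : ∀ i, IsWeightedHomogeneous parabolicWeight (parabolicLowering K (X i))
      (parabolicWeight i + (-2, 0)) := by
    intro i
    rw [parabolicLowering_X]
    fin_cases i
    · exact isWeightedHomogeneous_zero K parabolicWeight _
    · exact (isWeightedHomogeneous_C parabolicWeight (2 : K)).mul
        (isWeightedHomogeneous_X K parabolicWeight 0)
    · exact (isWeightedHomogeneous_C parabolicWeight (2 : K)).mul
        (isWeightedHomogeneous_X K parabolicWeight 1)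
  simpa [sub_eq_add_neg] using hp.derivation_apply hX

theorem parabolicDerivation_parabolicLowering_sub {p : MvPolynomial (Fin 3) K} {m d : ℤ}
    (hp : IsWeightedHomogeneous parabolicWeight p (m, d)) :
    parabolicDerivation K (parabolicLowering K p) - parabolicLowering K (parabolicDerivation K p)
      = (m : K) • p := by
  have hX : ∀ i, ⁅parabolicDerivation K, parabolicLowering K⁆ (X i)
      = (Int.castAddHom K).comp (AddMonoidHom.fst ℤ ℤ) (parabolicWeight i) • X i := by
    intro i
    fin_cases i <;> simp [Derivation.commutator_apply, parabolicWeight, smul_eq_C_mul]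
  simpa [Derivation.commutator_apply] using
    derivation_apply_eq_smul_of_isWeightedHomogeneous _ hX hp

theorem eq_zero_of_isWeightedHomogeneous_parabolicWeight_of_lt {p : MvPolynomial (Fin 3) K}
    {m d : ℤ} (hp : IsWeightedHomogeneous parabolicWeight p (m, d)) (hm : m < -2 * d) :
    p = 0 := by
  ext s
  rw [coeff_zero]
  by_contra hs
  have hw := hp hs
  rw [weight_parabolicWeight, Prod.mk.injEq] at hw
  omega

theorem X_two_dvd_of_isWeightedHomogeneous_parabolicWeight {p : MvPolynomial (Fin 3) K}
    {m d : ℤ} (hp : IsWeightedHomogeneous parabolicWeight p (m, d)) (hm : 0 < m) :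
    X 2 ∣ p := by
  rw [p.as_sum]
  refine Finset.dvd_sum fun s hs => X_dvd_monomial.mpr (Or.inr ?_)
  have hw := hp (mem_support_iff.mp hs)
  rw [weight_parabolicWeight, Prod.mk.injEq] at hw
  omega

theorem weightedHomogeneousComponent_parabolicDerivation (q : MvPolynomial (Fin 3) K)
    (m d : ℤ) :
    weightedHomogeneousComponent parabolicWeight (m + 2, d) (parabolicDerivation K q)
      = parabolicDerivation K (weightedHomogeneousComponent parabolicWeight (m, d) q) := by
  have hshift {p : MvPolynomial (Fin 3) K} {n : ℤ × ℤ}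
      (hp : IsWeightedHomogeneous parabolicWeight p n) :
      IsWeightedHomogeneous parabolicWeight (parabolicDerivation K p) (n + (2, 0)) := by
    obtain ⟨m, d⟩ := n
    simpa using isWeightedHomogeneous_parabolicDerivation hp
  simpa using
    weightedHomogeneousComponent_add_apply (parabolicDerivation K).toLinearMap hshift q (m, d)

theorem isSl2WeightGrading_parabolic (d : ℤ) :
    IsSl2WeightGrading (parabolicDerivation K).toLinearMap (parabolicLowering K).toLinearMap
      fun m => weightedHomogeneousSubmodule K parabolicWeight (m, d) where
  apply_e_mem hv := isWeightedHomogeneous_parabolicDerivation hv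
  apply_f_mem hv := isWeightedHomogeneous_parabolicLowering hv
  lie_apply hv := parabolicDerivation_parabolicLowering_sub hv
  exists_forall_lt_eq_bot := ⟨-2 * d, fun _ hm => (Submodule.eq_bot_iff _).mpr fun _ hp =>
    eq_zero_of_isWeightedHomogeneous_parabolicWeight_of_lt hp hm⟩

end CommRing

theorem X_two_dvd_parabolicDerivation {K : Type*} [CommRing K] [IsDomain K] [CharZero K]
    {q : MvPolynomial (Fin 3) K} (h : parabolicDerivation K (parabolicDerivation K q) = 0) :
    X 2 ∣ parabolicDerivation K q := by
  rw [← sum_weightedHomogeneousComponent parabolicWeight (parabolicDerivation K q),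
    finsum_eq_sum _ (weightedHomogeneousComponent_finsupp _)]
  refine Finset.dvd_sum fun ⟨m, d⟩ _ => ?_
  set u := weightedHomogeneousComponent parabolicWeight (m - 2, d) q
  have hu : IsWeightedHomogeneous parabolicWeight u (m - 2, d) :=
    weightedHomogeneousComponent_isWeightedHomogeneous _ _
  have hcomp_u : weightedHomogeneousComponent parabolicWeight (m, d) (parabolicDerivation K q)
      = parabolicDerivation K u := by
    simpa using weightedHomogeneousComponent_parabolicDerivation q (m - 2) d
  rw [hcomp_u]
  rcases le_or_gt m 0 with hm | hm
  · have heu : parabolicDerivation K (parabolicDerivation K u) = 0 := by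
      rw [← hcomp_u, ← weightedHomogeneousComponent_parabolicDerivation, h, map_zero]
    rw [show parabolicDerivation K u = 0 from
      (isSl2WeightGrading_parabolic d).apply_eq_zero_of_nonpos hu hm heu]
    exact dvd_zero _
  · exact X_two_dvd_of_isWeightedHomogeneous_parabolicWeight
      (isWeightedHomogeneous_parabolicDerivation hu) (by omega)

/-- For `∂ = y ∂/∂x + z ∂/∂y` on `K[x,y,z]` (`K` of characteristic zero), the
plinth ideal `pl(∂) = Ker ∂ ∩ Im ∂` is the principal ideal of `Ker ∂` generated by `z`. -/
theorem parabolicDerivation_plinth (K : Type*) [Field K] [CharZero K] :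
    ∀ p : MvPolynomial (Fin 3) K,
      (parabolicDerivation K p = 0 ∧ p ∈ Set.range ⇑(parabolicDerivation K)) ↔
      ∃ k : MvPolynomial (Fin 3) K, parabolicDerivation K k = 0 ∧ p = k * X 2 := by
  intro p
  constructor
  · rintro ⟨hp, q, rfl⟩
    obtain ⟨k, hk⟩ := X_two_dvd_parabolicDerivation hp
    refine ⟨k, ?_, by rw [hk, mul_comm]⟩
    simpa [hk, Derivation.leibniz, X_ne_zero] using hp
  · rintro ⟨k, hk, rfl⟩
    exact ⟨by simp [Derivation.leibniz, hk], k * X 1, by simp [Derivation.leibniz, hk]⟩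
end

section
/- Let K be a field of characteristic zero and ∂ = y ∂/∂x + z ∂/∂y on K[x,y,z], extended to the localization at z. Then no slice of ∂ on K[x,y,z][z⁻¹] lies in K[x,y,z]; that is, there is no f ∈ K[x,y,z] with ∂(f) = 1 in the localization. -/
open MvPolynomial

/-- The canonical map `K[x,y,z] → K[x,y,z][z⁻¹]`. -/
noncomputable def locMap (K : Type*) [Field K] :
    MvPolynomial (Fin 3) K →+* Localization.Away (X 2 : MvPolynomial (Fin 3) K) :=
  algebraMap _ _

lemma constCoeff_parabolic (K : Type*) [CommRing K] (p : MvPolynomial (Fin 3) K) :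
    constantCoeff (parabolicDerivation K p) = 0 := by
  induction p using MvPolynomial.induction_on with
  | C a =>
      rw [show (C a : MvPolynomial (Fin 3) K) = a • 1 by simp [Algebra.smul_def]]
      simp
  | add p q hp hq => simp [hp, hq]
  | mul_X p i hp =>
      rw [Derivation.leibniz]
      simp only [map_add, map_smul, smul_eq_mul, map_mul, hp, mul_zero, zero_add]
      have : (parabolicDerivation K) (X i) = ![X 1, X 2, (0 : MvPolynomial (Fin 3) K)] i := by
        simp [parabolicDerivation, MvPolynomial.mkDerivation_X]
      rw [this]
      fin_cases i <;> simp

/-- For `∂ = y ∂/∂x + z ∂/∂y` extended to `K[x,y,z][z⁻¹]`, no slice of `∂`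
lies in `K[x,y,z]`: there is no `f ∈ K[x,y,z]` with `∂ f = 1` in the localization. -/
theorem parabolicDerivation_no_polynomial_slice (K : Type*) [Field K] [CharZero K]
    (D : Derivation K (Localization.Away (X 2 : MvPolynomial (Fin 3) K))
          (Localization.Away (X 2 : MvPolynomial (Fin 3) K)))
    (hext : ∀ p : MvPolynomial (Fin 3) K,
      D (locMap K p) = locMap K (parabolicDerivation K p)) :
    ¬ ∃ f : MvPolynomial (Fin 3) K, D (locMap K f) = 1 := by
  rintro ⟨f, hf⟩
  rw [hext] at hf
  have hinj : Function.Injective (locMap K) :=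
    IsLocalization.injective _ (powers_le_nonZeroDivisors_of_noZeroDivisors
      (MvPolynomial.X_ne_zero 2))
  have h1 : parabolicDerivation K f = 1 := by
    apply hinj
    rw [hf, map_one]
  have := congrArg constantCoeff h1
  rw [constCoeff_parabolic] at this
  simp at this
end

section
/- Let K be a field of characteristic zero and ∂ = u ∂/∂x + v ∂/∂y the derivation on K[x,y,u,v] with ∂(x)=u, ∂(y)=v, ∂(u)=∂(v)=0. Then Ker(∂) = K[u, v, xv − yu]. -/
/-!
Inclusion `K[u, v, xv - yu] ⊆ Ker ∂` is a direct computation. Conversely, in characteristic zero a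
polynomial `p` killed by `∂` is invariant under the Taylor shift `exp(s∂)`, i.e.
`p(x + su, y + sv, u, v) = p` for every `s` in every `K`-algebra. After inverting `u`, the shift by
`s = x/u` gives `p = p(0, -(xv - yu)/u, u, v)`, so `uᵏ p ∈ K[u, v, xv - yu]` for some `k`.
Finally `u` can be cancelled: if `u r = F(u, v, xv - yu)`, then the map `x ↦ W/V, y ↦ 0` into
`K[U, V, W][1/V]` shows `Vⁿ F ∈ (U)`, hence `U ∣ F` since `U` is prime.
-/

open MvPolynomial

/-- The derivation `u ∂/∂x + v ∂/∂y` on `K[x,y,u,v]`, with `x = X 0`, `y = X 1`,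
`u = X 2`, `v = X 3`. -/
noncomputable def transDerivation (K : Type*) [CommRing K] :
    Derivation K (MvPolynomial (Fin 4) K) (MvPolynomial (Fin 4) K) :=
  MvPolynomial.mkDerivation K ![X 2, X 3, 0, 0]

theorem MvPolynomial.aeval_algebraMap_X {σ R S : Type*} [CommSemiring R] [CommSemiring S]
    [Algebra R S] [Algebra (MvPolynomial σ R) S] [IsScalarTower R (MvPolynomial σ R) S]
    (p : MvPolynomial σ R) :
    aeval (fun i : σ => algebraMap (MvPolynomial σ R) S (X i)) p = algebraMap _ S p := by
  rw [← IsScalarTower.coe_toAlgHom' R _ S, ← comp_aeval_apply, aeval_X_left_apply]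

theorem Subalgebra.exists_mul_pow_eq_algebraMap_of_mem_adjoin {K R : Type*} [CommSemiring K]
    [CommSemiring R] [Algebra K R] (A : Subalgebra K R) {u : R} (hu : u ∈ A)
    {z : Localization.Away u}
    (hz : z ∈ Algebra.adjoin K
      (insert (IsLocalization.Away.invSelf u) (algebraMap R (Localization.Away u) '' A))) :
    ∃ k : ℕ, ∃ a ∈ A, z * algebraMap R _ u ^ k = algebraMap R _ a := by
  induction hz using Algebra.adjoin_induction with
  | mem z hz =>
    obtain rfl | ⟨a, ha, rfl⟩ := hz
    · exact ⟨1, 1, A.one_mem, by rw [pow_one, mul_comm, IsLocalization.Away.mul_invSelf, map_one]⟩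
    · exact ⟨0, a, ha, by rw [pow_zero, mul_one]⟩
  | algebraMap r =>
    exact ⟨0, algebraMap K R r, A.algebraMap_mem r, by simp [← IsScalarTower.algebraMap_apply]⟩
  | add z₁ z₂ _ _ ih₁ ih₂ =>
    obtain ⟨k₁, a₁, ha₁, h₁⟩ := ih₁
    obtain ⟨k₂, a₂, ha₂, h₂⟩ := ih₂
    refine ⟨k₁ + k₂, a₁ * u ^ k₂ + a₂ * u ^ k₁,
      A.add_mem (A.mul_mem ha₁ (A.pow_mem hu _)) (A.mul_mem ha₂ (A.pow_mem hu _)), ?_⟩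
    simp only [map_add, map_mul, map_pow, ← h₁, ← h₂]
    ring
  | mul z₁ z₂ _ _ ih₁ ih₂ =>
    obtain ⟨k₁, a₁, ha₁, h₁⟩ := ih₁
    obtain ⟨k₂, a₂, ha₂, h₂⟩ := ih₂
    refine ⟨k₁ + k₂, a₁ * a₂, A.mul_mem ha₁ ha₂, ?_⟩
    simp only [map_mul, ← h₁, ← h₂]
    ring

section CommRing

variable {K : Type*} [CommRing K]

noncomputable abbrev adjoinUVW (K : Type*) [CommRing K] : Subalgebra K (MvPolynomial (Fin 4) K) :=
  Algebra.adjoin K {X 2, X 3, X 0 * X 3 - X 1 * X 2}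

lemma adjoinUVW_eq_range :
    adjoinUVW K = (aeval ![X 2, X 3, X 0 * X 3 - X 1 * X 2]).range := by
  rw [← Algebra.adjoin_range_eq_range_aeval, Matrix.range_cons, Matrix.range_cons_cons_empty,
    Set.singleton_union]

@[simp]
lemma transDerivation_X (i : Fin 4) : transDerivation K (X i) = ![X 2, X 3, 0, 0] i :=
  mkDerivation_X _ _ _

lemma transDerivation_eq_zero_of_mem_adjoinUVW {p : MvPolynomial (Fin 4) K}
    (hp : p ∈ adjoinUVW K) : transDerivation K p = 0 := by
  induction hp using Algebra.adjoin_induction with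
  | mem q hq =>
    obtain rfl | rfl | rfl := hq
    · simp
    · simp
    · simp only [map_sub, Derivation.leibniz, transDerivation_X, smul_eq_mul, Matrix.cons_val]
      ring
  | algebraMap r => exact (transDerivation K).map_algebraMap r
  | add _ _ _ _ ih₁ ih₂ => rw [map_add, ih₁, ih₂, add_zero]
  | mul _ _ _ _ ih₁ ih₂ => rw [Derivation.leibniz, ih₁, ih₂, smul_zero, smul_zero, add_zero]

/-- `exp(T∂) p = p(x + Tu, y + Tv, u, v)`; the series stops since `∂` kills `∂ xᵢ`. -/
noncomputable def transExp (K : Type*) [CommRing K] :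
    MvPolynomial (Fin 4) K →ₐ[K] Polynomial (MvPolynomial (Fin 4) K) :=
  aeval fun i => Polynomial.C (X i) + Polynomial.X * Polynomial.C (transDerivation K (X i))

lemma derivative_transExp (p : MvPolynomial (Fin 4) K) :
    Polynomial.derivative (transExp K p) = transExp K (transDerivation K p) := by
  induction p using MvPolynomial.induction_on with
  | C a => simp [transExp]
  | add p q hp hq => rw [map_add, map_add, map_add, hp, hq, map_add]
  | mul_X p i ih =>
    have hX : Polynomial.derivative (transExp K (X i)) =
        transExp K (transDerivation K (X i)) := by
      fin_cases i <;> simp [transExp]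
    rw [map_mul, Polynomial.derivative_mul, ih, hX, Derivation.leibniz, map_add, smul_eq_mul,
      smul_eq_mul, map_mul, map_mul]
    ring

lemma coeff_zero_transExp (p : MvPolynomial (Fin 4) K) : (transExp K p).coeff 0 = p := by
  rw [Polynomial.coeff_zero_eq_eval_zero]
  show (Polynomial.evalRingHom 0).comp (transExp K).toRingHom p = RingHom.id _ p
  congr 1
  apply MvPolynomial.ringHom_ext <;> simp [transExp]

variable [IsDomain K]

lemma mem_adjoinUVW_of_X_two_mul_mem {r : MvPolynomial (Fin 4) K}
    (h : X 2 * r ∈ adjoinUVW K) : r ∈ adjoinUVW K := by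
  rw [adjoinUVW_eq_range, AlgHom.mem_range] at h ⊢
  obtain ⟨F, hF⟩ := h
  let L := Localization.Away (X 1 : MvPolynomial (Fin 3) K)
  let ι := algebraMap (MvPolynomial (Fin 3) K) L
  let b := IsLocalization.Away.invSelf (S := L) (X 1 : MvPolynomial (Fin 3) K)
  have hvb : ι (X 1) * b = 1 := IsLocalization.Away.mul_invSelf _
  -- `x ↦ W/V, y ↦ 0` inverts the presentation `U, V, W ↦ u, v, xv - yu` once `V` is inverted
  let ρ : MvPolynomial (Fin 4) K →ₐ[K] L := aeval ![ι (X 2) * b, 0, ι (X 0), ι (X 1)]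
  have hρ : ∀ G, ρ (aeval ![X 2, X 3, X 0 * X 3 - X 1 * X 2] G) = ι G := by
    suffices ρ.comp (aeval ![X 2, X 3, X 0 * X 3 - X 1 * X 2]) = aeval fun i => ι (X i) from
      fun G => by rw [← AlgHom.comp_apply, this, aeval_algebraMap_X]
    ext i
    fin_cases i <;> simp [ρ]
    linear_combination ι (X 2) * hvb
  obtain ⟨n, G, hG⟩ := IsLocalization.Away.surj (X 1 : MvPolynomial (Fin 3) K) (ρ r)
  change ρ r * ι (X 1) ^ n = ι G at hG
  have hι : Function.Injective ι := IsLocalization.injective L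
    (powers_le_nonZeroDivisors_of_noZeroDivisors (X_ne_zero 1))
  have hFG : F * X 1 ^ n = X 0 * G := hι <| by
    rw [map_mul, map_mul, map_pow, ← hG, ← hρ, hF, map_mul, mul_assoc]
    congr 1
    simp [ρ]
  have hX : ¬ (X 0 : MvPolynomial (Fin 3) K) ∣ X 1 ^ n := fun h =>
    absurd (X_dvd_X.mp (X_prime.dvd_of_dvd_pow h)) (by decide)
  obtain ⟨F', rfl⟩ := (X_prime.dvd_or_dvd ⟨G, hFG⟩).resolve_right hX
  refine ⟨F', mul_left_cancel₀ (X_ne_zero 2) ?_⟩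
  rw [← hF, map_mul]
  simp

lemma mem_adjoinUVW_of_X_two_pow_mul_mem (k : ℕ) {r : MvPolynomial (Fin 4) K}
    (h : X 2 ^ k * r ∈ adjoinUVW K) : r ∈ adjoinUVW K := by
  induction k generalizing r with
  | zero => simpa using h
  | succ k ih => exact mem_adjoinUVW_of_X_two_mul_mem (ih (by rwa [pow_succ, mul_assoc] at h))

variable [CharZero K]

lemma transExp_eq_C_of_transDerivation_eq_zero {p : MvPolynomial (Fin 4) K}
    (hp : transDerivation K p = 0) : transExp K p = Polynomial.C p := by
  rw [Polynomial.eq_C_of_derivative_eq_zero (p := transExp K p)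
    (by rw [derivative_transExp, hp, map_zero]), coeff_zero_transExp]

lemma aeval_shift_eq_of_transDerivation_eq_zero {B : Type*} [CommRing B] [Algebra K B]
    {p : MvPolynomial (Fin 4) K} (hp : transDerivation K p = 0) (g : Fin 4 → B) (s : B) :
    aeval (fun i => g i + s * aeval g (transDerivation K (X i))) p = aeval g p := by
  have h : (Polynomial.eval₂RingHom (aeval g).toRingHom s).comp (transExp K).toRingHom
      = (aeval fun i => g i + s * aeval g (transDerivation K (X i))).toRingHom := by
    apply MvPolynomial.ringHom_ext
    · simp [transExp]
    · intro i
      simp [transExp]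
      ring
  calc aeval (fun i => g i + s * aeval g (transDerivation K (X i))) p
      = (transExp K p).eval₂ (aeval g).toRingHom s := (RingHom.congr_fun h p).symm
    _ = aeval g p := by rw [transExp_eq_C_of_transDerivation_eq_zero hp, Polynomial.eval₂_C]; rfl

lemma exists_X_two_pow_mul_mem_adjoinUVW {p : MvPolynomial (Fin 4) K}
    (hp : transDerivation K p = 0) : ∃ k : ℕ, X 2 ^ k * p ∈ adjoinUVW K := by
  let L := Localization.Away (X 2 : MvPolynomial (Fin 4) K)
  let ι := algebraMap (MvPolynomial (Fin 4) K) L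
  let a := IsLocalization.Away.invSelf (S := L) (X 2 : MvPolynomial (Fin 4) K)
  have hua : ι (X 2) * a = 1 := IsLocalization.Away.mul_invSelf _
  let g : Fin 4 → L := ![0, -(ι (X 0 * X 3 - X 1 * X 2) * a), ι (X 2), ι (X 3)]
  -- shift by `s = x/u`
  have key : ι p = aeval g p := calc
    ι p = aeval (fun i => ι (X i)) p := (aeval_algebraMap_X p).symm
    _ = aeval (fun i => g i + ι (X 0) * a * aeval g (transDerivation K (X i))) p := by
      congr 2
      funext i
      fin_cases i <;> simp [g, map_sub, map_mul]
      · linear_combination -ι (X 0) * hua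
      · linear_combination -ι (X 1) * hua
    _ = aeval g p := aeval_shift_eq_of_transDerivation_eq_zero hp g _
  have hmem : aeval g p ∈ Algebra.adjoin K (insert a (ι '' adjoinUVW K)) := by
    have hA : ∀ q ∈ adjoinUVW K, ι q ∈ Algebra.adjoin K (insert a (ι '' adjoinUVW K)) :=
      fun q hq => Algebra.subset_adjoin (Set.mem_insert_of_mem _ ⟨q, hq, rfl⟩)
    refine Algebra.adjoin_le ?_ (by rw [Algebra.adjoin_range_eq_range_aeval]; exact ⟨p, rfl⟩)
    rintro _ ⟨i, rfl⟩
    fin_cases i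
    · exact zero_mem _
    · exact neg_mem (mul_mem (hA (X 0 * X 3 - X 1 * X 2) (Algebra.subset_adjoin (by simp)))
        (Algebra.subset_adjoin (Set.mem_insert _ _)))
    · exact hA _ (Algebra.subset_adjoin (by simp))
    · exact hA _ (Algebra.subset_adjoin (by simp))
  obtain ⟨k, q, hq, h⟩ := (adjoinUVW K).exists_mul_pow_eq_algebraMap_of_mem_adjoin
    (Algebra.subset_adjoin (by simp)) (key ▸ hmem)
  have hι : Function.Injective ι := IsLocalization.injective L
    (powers_le_nonZeroDivisors_of_noZeroDivisors (X_ne_zero 2))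
  exact ⟨k, by rwa [hι (by rw [map_mul, map_pow, mul_comm, h] : ι (X 2 ^ k * p) = ι q)]⟩

end CommRing

/-- For `∂ = u ∂/∂x + v ∂/∂y` on `K[x,y,u,v]` (`K` of characteristic zero),
`Ker ∂ = K[u, v, xv − yu]`. -/
theorem transDerivation_kernel (K : Type*) [Field K] [CharZero K] :
    ∀ p : MvPolynomial (Fin 4) K,
      transDerivation K p = 0 ↔
      p ∈ Algebra.adjoin K ({X 2, X 3, X 0 * X 3 - X 1 * X 2} :
        Set (MvPolynomial (Fin 4) K)) := by
  intro p
  refine ⟨fun hp => ?_, transDerivation_eq_zero_of_mem_adjoinUVW⟩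
  obtain ⟨k, hk⟩ := exists_X_two_pow_mul_mem_adjoinUVW hp
  exact mem_adjoinUVW_of_X_two_pow_mul_mem k hk
end

section
/- Let K be a field of characteristic zero, ∂ = u ∂/∂x + v ∂/∂y on K[x,y,u,v], extended to the localization B = K[x,y,u,v][u⁻¹]. Then every slice s of ∂ on B satisfies s − x/u ∈ Ker(∂|_B), and Ker(∂|_B) = K[u, u⁻¹, v, xv − yu]. In particular, ∂ has no slice in K[x,y,u,v]. -/
open MvPolynomial

/-- The canonical map `K[x,y,u,v] → K[x,y,u,v][u⁻¹]`. -/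
noncomputable def locMapU (K : Type*) [Field K] :
    MvPolynomial (Fin 4) K →+* Localization.Away (X 2 : MvPolynomial (Fin 4) K) :=
  algebraMap _ _

/-!
Let `B = K[x,y,u,v][u⁻¹]`. The element `t = x/u` is a slice, and
`A = K[u, u⁻¹, v, xv − yu]` is killed by `∂`. Since `x = tu` and `y = tv − (xv − yu)u⁻¹`, we
have `B = A[t]`, and on `A[t]` the derivation acts as `d/dt`: `∂(P(t)) = P'(t)`. In
characteristic zero this makes `t` transcendental over `A` (a relation `P(t) = 0` of least
degree would give `P'(t) = 0`, hence `P' = 0`), so `∂(P(t)) = 0` forces `P` to be constant,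
i.e. `Ker ∂ = A`. Two slices differ by an element of the kernel. Finally `∂` maps `K[x,y,u,v]`
into the ideal `(u, v)`, which misses `1`.
-/

namespace Derivation

variable {K B : Type*} [CommRing K] [CommRing B] [Algebra K B] (D : Derivation K B B)
  {A : Subalgebra K B}

theorem map_aeval_of_eqOn_zero (hA : Set.EqOn D 0 A) (t : B) (P : Polynomial A) :
    D (Polynomial.aeval t P) = Polynomial.aeval t (Polynomial.derivative P) * D t := by
  -- Killing `A`, `D` is `A`-linear, so the chain rule over `A` applies.
  let DA : Derivation A B B := Derivation.mk'
    { toFun := D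
      map_add' := D.map_add
      map_smul' a b := by simp [Subalgebra.smul_def, D.leibniz, hA a.2] }
    D.leibniz
  exact DA.comp_aeval_eq t P

theorem transcendental_of_apply_eq_one [IsAddTorsionFree A] (hA : Set.EqOn D 0 A) {t : B}
    (ht : D t = 1) : Transcendental A t := by
  rw [transcendental_iff]
  intro P
  induction h : P.natDegree using Nat.strong_induction_on generalizing P with
  | _ n ih =>
    intro hP
    obtain rfl | hn := eq_or_ne n 0
    · rw [Polynomial.eq_C_of_natDegree_eq_zero h] at hP ⊢
      simpa using hP
    · have hP' : Polynomial.aeval t (Polynomial.derivative P) = 0 := by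
        rw [← mul_one (Polynomial.aeval t _), ← ht, ← D.map_aeval_of_eqOn_zero hA, hP,
          D.map_zero]
      have hderiv := ih _ (by rw [Polynomial.natDegree_derivative]; omega) _ rfl hP'
      exact absurd (Polynomial.derivative_eq_zero.1 hderiv) (h ▸ hn)

theorem mem_of_apply_eq_zero [IsAddTorsionFree A] (hA : Set.EqOn D 0 A) {t : B}
    (ht : D t = 1) (htop : Algebra.adjoin A {t} = ⊤) {q : B} (hq : D q = 0) : q ∈ A := by
  obtain ⟨P, rfl⟩ : ∃ P : Polynomial A, Polynomial.aeval t P = q := by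
    rw [← AlgHom.mem_range, ← Algebra.adjoin_singleton_eq_range_aeval, htop]
    trivial
  have hP' : Polynomial.derivative P = 0 := by
    refine transcendental_iff.1 (D.transcendental_of_apply_eq_one hA ht) _ ?_
    rw [← mul_one (Polynomial.aeval t _), ← ht, ← D.map_aeval_of_eqOn_zero hA, hq]
  rw [Polynomial.eq_C_of_derivative_eq_zero hP', Polynomial.aeval_C]
  exact (P.coeff 0).2

end Derivation

theorem MvPolynomial.derivation_mem_of_forall_X_mem {σ R : Type*} [CommSemiring R]
    (D : Derivation R (MvPolynomial σ R) (MvPolynomial σ R)) {I : Ideal (MvPolynomial σ R)}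
    (h : ∀ i, D (X i) ∈ I) (p : MvPolynomial σ R) : D p ∈ I := by
  induction p using MvPolynomial.induction_on with
  | C a => simp [derivation_C]
  | add p q hp hq => rw [map_add]; exact add_mem hp hq
  | mul_X p i hp =>
    rw [D.leibniz, smul_eq_mul, smul_eq_mul]
    exact add_mem (I.mul_mem_left _ (h i)) (I.mul_mem_left _ hp)

section

variable {K : Type*} [Field K]

local notation "B" => Localization.Away (X 2 : MvPolynomial (Fin 4) K)

@[simp] theorem transDerivation_X_zero : transDerivation K (X 0) = X 2 := mkDerivation_X _ _ _
@[simp] theorem transDerivation_X_one : transDerivation K (X 1) = X 3 := mkDerivation_X _ _ _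
@[simp] theorem transDerivation_X_two : transDerivation K (X 2) = 0 := mkDerivation_X _ _ _
@[simp] theorem transDerivation_X_three : transDerivation K (X 3) = 0 := mkDerivation_X _ _ _

theorem constantCoeff_transDerivation (p : MvPolynomial (Fin 4) K) :
    constantCoeff (transDerivation K p) = 0 :=
  derivation_mem_of_forall_X_mem (I := RingHom.ker constantCoeff) _
    (fun i => by fin_cases i <;> simp) p

theorem transDerivation_ne_one (f : MvPolynomial (Fin 4) K) : transDerivation K f ≠ 1 := by
  intro hf
  simpa [hf] using constantCoeff_transDerivation f

theorem transDerivation_xv_sub_yu : transDerivation K (X 0 * X 3 - X 1 * X 2) = 0 := by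
  simp only [map_sub, Derivation.leibniz, transDerivation_X_zero, transDerivation_X_one,
    transDerivation_X_two, transDerivation_X_three, smul_eq_mul]
  ring

theorem locMapU_X_two_mul_invSelf : locMapU K (X 2) * Localization.Away.invSelf (X 2) = 1 := by
  rw [Localization.Away.invSelf, Localization.mk_eq_mk']
  exact IsLocalization.Away.mul_invSelf (S := B) _

variable (K) in
noncomputable def transKernel : Subalgebra K B :=
  Algebra.adjoin K {locMapU K (X 2), Localization.Away.invSelf (X 2), locMapU K (X 3),
    locMapU K (X 0 * X 3 - X 1 * X 2)}

variable (K) in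
noncomputable def transSlice : B :=
  locMapU K (X 0) * Localization.Away.invSelf (X 2)

theorem locMapU_mem_adjoin_transSlice (p : MvPolynomial (Fin 4) K) :
    locMapU K p ∈ Algebra.adjoin (transKernel K) {transSlice K} := by
  set S := Algebra.adjoin (transKernel K) {transSlice K}
  have hA : ∀ a ∈ transKernel K, a ∈ S := fun a ha => S.algebraMap_mem ⟨a, ha⟩
  have ht : transSlice K ∈ S := Algebra.self_mem_adjoin_singleton _ _
  have hX : ∀ i, locMapU K (X i) ∈ S
    | 0 => by
      have hx : locMapU K (X 0) = transSlice K * locMapU K (X 2) := by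
        rw [transSlice]
        linear_combination (locMapU K (X 0)) * (locMapU_X_two_mul_invSelf (K := K)).symm
      rw [hx]
      exact mul_mem ht (hA _ (Algebra.subset_adjoin (by simp)))
    | 1 => by
      have hy : locMapU K (X 1) = transSlice K * locMapU K (X 3) -
          locMapU K (X 0 * X 3 - X 1 * X 2) * Localization.Away.invSelf (X 2) := by
        simp only [map_sub, map_mul, transSlice]
        linear_combination (-locMapU K (X 1)) * locMapU_X_two_mul_invSelf (K := K)
      rw [hy]
      exact sub_mem (mul_mem ht (hA _ (Algebra.subset_adjoin (by simp))))
        (mul_mem (hA _ (Algebra.subset_adjoin (by simp))) (hA _ (Algebra.subset_adjoin (by simp))))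
    | 2 => hA _ (Algebra.subset_adjoin (by simp))
    | 3 => hA _ (Algebra.subset_adjoin (by simp))
  induction p using MvPolynomial.induction_on with
  | C k => exact S.algebraMap_mem (algebraMap K (transKernel K) k)
  | add p q hp hq => rw [map_add]; exact add_mem hp hq
  | mul_X p i hp => rw [map_mul]; exact mul_mem hp (hX i)

theorem adjoin_transSlice_eq_top :
    Algebra.adjoin (transKernel K) {transSlice K} = ⊤ := by
  refine eq_top_iff.2 fun q _ => ?_
  obtain ⟨n, p, hp⟩ := IsLocalization.Away.surj (X 2 : MvPolynomial (Fin 4) K) q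
  have hq : q = locMapU K p * Localization.Away.invSelf (X 2) ^ n := by
    rw [← locMapU] at hp
    rw [← hp, mul_assoc, ← mul_pow, locMapU_X_two_mul_invSelf, one_pow, mul_one]
  rw [hq]
  refine mul_mem (locMapU_mem_adjoin_transSlice p)
    (pow_mem (Subalgebra.algebraMap_mem _ (⟨_, ?_⟩ : transKernel K)) n)
  exact Algebra.subset_adjoin (Set.mem_insert_of_mem _ (Set.mem_insert _ _))

theorem apply_invSelf_eq_zero {D : Derivation K B B}
    (hext : ∀ p : MvPolynomial (Fin 4) K, D (locMapU K p) = locMapU K (transDerivation K p)) :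
    D (Localization.Away.invSelf (X 2)) = 0 := by
  rw [D.leibniz_of_mul_eq_one ((mul_comm _ _).trans locMapU_X_two_mul_invSelf), hext,
    transDerivation_X_two, map_zero, smul_zero]

theorem apply_transSlice_eq_one {D : Derivation K B B}
    (hext : ∀ p : MvPolynomial (Fin 4) K, D (locMapU K p) = locMapU K (transDerivation K p)) :
    D (transSlice K) = 1 := by
  rw [transSlice, D.leibniz, apply_invSelf_eq_zero hext, hext, transDerivation_X_zero, smul_zero,
    zero_add, smul_eq_mul, mul_comm]
  exact locMapU_X_two_mul_invSelf

theorem eqOn_zero_transKernel {D : Derivation K B B}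
    (hext : ∀ p : MvPolynomial (Fin 4) K, D (locMapU K p) = locMapU K (transDerivation K p)) :
    Set.EqOn D 0 (transKernel K) := by
  refine D.eqOn_adjoin (D2 := 0) ?_
  rintro a (rfl | rfl | rfl | rfl)
  · simp [hext]
  · exact apply_invSelf_eq_zero hext
  · simp [hext]
  · simp only [Derivation.zero_apply, hext, transDerivation_xv_sub_yu, map_zero]

end

/-- Extend `∂ = u ∂/∂x + v ∂/∂y` to `B = K[x,y,u,v][u⁻¹]`.  Every slice `s` of
the extension satisfies `s − x/u ∈ Ker`, the kernel of the extension is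
`K[u, u⁻¹, v, xv − yu]`, and `∂` has no slice in `K[x,y,u,v]`. -/
theorem transDerivation_localized_slices (K : Type*) [Field K] [CharZero K]
    (D : Derivation K (Localization.Away (X 2 : MvPolynomial (Fin 4) K))
          (Localization.Away (X 2 : MvPolynomial (Fin 4) K)))
    (hext : ∀ p : MvPolynomial (Fin 4) K,
      D (locMapU K p) = locMapU K (transDerivation K p)) :
    (∀ s : Localization.Away (X 2 : MvPolynomial (Fin 4) K), D s = 1 →
      D (s - locMapU K (X 0) * Localization.Away.invSelf (X 2)) = 0) ∧
    (∀ q : Localization.Away (X 2 : MvPolynomial (Fin 4) K), D q = 0 ↔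
      q ∈ Algebra.adjoin K ({locMapU K (X 2), Localization.Away.invSelf (X 2),
        locMapU K (X 3), locMapU K (X 0 * X 3 - X 1 * X 2)} :
        Set (Localization.Away (X 2 : MvPolynomial (Fin 4) K)))) ∧
    ¬ ∃ f : MvPolynomial (Fin 4) K, transDerivation K f = 1 := by
  have hslice : D (transSlice K) = 1 := apply_transSlice_eq_one hext
  have hker : Set.EqOn D 0 (transKernel K) := eqOn_zero_transKernel hext
  have := IsAddTorsionFree.of_isTorsionFree K (transKernel K)
  refine ⟨fun s hs => ?_, fun q => ⟨fun hq => ?_, fun hq => hker hq⟩,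
    fun ⟨f, hf⟩ => transDerivation_ne_one f hf⟩
  · rw [map_sub, hs, ← transSlice, hslice, sub_self]
  · exact D.mem_of_apply_eq_zero hker hslice adjoin_transSlice_eq_top hq
end

section
/- Let K be an algebraically closed field of characteristic zero, B a finitely generated K-algebra, ∂ a locally nilpotent K-derivation on B, and h ∈ Ker(∂) with h ∈ pl(∂), say h = ∂(f). Then in the localization B_h the element f/h is a slice of the extension of ∂, and consequently B_h ≅ (Ker(∂)_h)[s] is a polynomial ring in one variable over Ker(∂)_h (Slice Theorem applied to B_h). -/
/-!
Since `∂h = 0`, the extension `D` also kills `1/h`, so `D (f/h) = ∂f/h = 1`; and `D` is again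
locally nilpotent because `Dⁿ (b/hᵏ) = ∂ⁿ b / hᵏ`. For a locally nilpotent derivation `D` with a
slice `s` over a field of characteristic zero, `D` acts on `ker(D)[s]` as `d/dX`. Evaluation at
`s` is then injective, since a polynomial in its kernel has its derivative in the kernel too and
so is constant by induction on the degree; and it is surjective, by induction on the order of
nilpotency, because `d/dX` is onto in characteristic zero.
-/

/-- The kernel of a derivation, as a subalgebra. -/
def Derivation.kerSubalgebra {K B : Type*} [CommRing K] [CommRing B] [Algebra K B]
    (D : Derivation K B B) : Subalgebra K B where
  carrier := {b | D b = 0}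
  algebraMap_mem' r := by simp
  add_mem' {a b} ha hb := by simp_all
  mul_mem' {a b} ha hb := by
    simp only [Set.mem_setOf_eq, Derivation.leibniz, smul_eq_mul] at *
    rw [ha, hb]; ring

open Polynomial

def Derivation.IsLocallyNilpotent {R A : Type*} [CommSemiring R] [CommSemiring A] [Algebra R A]
    (D : Derivation R A A) : Prop :=
  ∀ x, ∃ n : ℕ, (⇑D)^[n] x = 0

theorem Polynomial.derivative_surjective_of_charZero {K R : Type*} [Field K] [CharZero K]
    [CommRing R] [Algebra K R] : Function.Surjective (derivative (R := R)) := by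
  intro p
  induction p using Polynomial.induction_on' with
  | add p q hp hq =>
    obtain ⟨p', rfl⟩ := hp
    obtain ⟨q', rfl⟩ := hq
    exact ⟨p' + q', map_add _ _ _⟩
  | monomial n a =>
    refine ⟨monomial (n + 1) (((n + 1 : ℕ) : K)⁻¹ • a), ?_⟩
    have hn : ((n + 1 : ℕ) : K) ≠ 0 := Nat.cast_ne_zero.2 n.succ_ne_zero
    rw [derivative_monomial, Nat.add_sub_cancel, smul_mul_assoc, ← map_natCast (algebraMap K R),
      ← Algebra.commutes, ← Algebra.smul_def, smul_smul, inv_mul_cancel₀ hn, one_smul]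

namespace Derivation

section Slice

variable {K L : Type*} [Field K] [CommRing L] [Algebra K L] (D : Derivation K L L) {s : L}

theorem apply_aeval_kerSubalgebra (q : D.kerSubalgebra[X]) :
    D (aeval s q) = aeval s (derivative q) * D s := by
  induction q using Polynomial.induction_on with
  | C a => rw [aeval_C, derivative_C, map_zero, zero_mul]; exact a.2
  | add p q hp hq => simp only [map_add, hp, hq, add_mul]
  | monomial n a _ =>
    have ha : D (a : L) = 0 := a.2
    simp only [map_mul, aeval_C, Subalgebra.algebraMap_apply, map_pow, aeval_X, leibniz,
      leibniz_pow, add_tsub_cancel_right, smul_eq_mul, nsmul_eq_mul, Nat.cast_add, Nat.cast_one, ha,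
      mul_zero, add_zero, derivative_mul, derivative_C, zero_mul, derivative_X_pow_succ, map_add,
      _root_.map_natCast, map_one, zero_add]
    ring

variable [CharZero K]

theorem aeval_kerSubalgebra_injective (hs : D s = 1) :
    Function.Injective (aeval (R := D.kerSubalgebra) s) := by
  have : IsAddTorsionFree D.kerSubalgebra := .of_isTorsionFree K _
  have eq_zero_of_derivative_eq_zero {q : D.kerSubalgebra[X]} (hq' : derivative q = 0)
      (hq : aeval s q = 0) : q = 0 := by
    rw [eq_C_of_derivative_eq_zero hq'] at hq ⊢
    rw [aeval_C] at hq
    rw [show q.coeff 0 = 0 from Subtype.ext hq, map_zero]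
  suffices ∀ n : ℕ, ∀ q : D.kerSubalgebra[X], q.natDegree ≤ n → aeval s q = 0 → q = 0 from
    (injective_iff_map_eq_zero _).2 fun q => this _ q le_rfl
  intro n
  induction n with
  | zero => exact fun q hq => eq_zero_of_derivative_eq_zero (derivative_eq_zero.2 (by omega))
  | succ n ih =>
    refine fun q hq hq0 => eq_zero_of_derivative_eq_zero ?_ hq0
    refine ih _ ((natDegree_derivative_le q).trans (by omega)) ?_
    rw [← mul_one (aeval s _), ← hs, ← apply_aeval_kerSubalgebra, hq0, map_zero]

theorem aeval_kerSubalgebra_surjective (hD : D.IsLocallyNilpotent) (hs : D s = 1) :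
    Function.Surjective (aeval (R := D.kerSubalgebra) s) := by
  suffices ∀ n : ℕ, ∀ x : L, (⇑D)^[n] x = 0 → ∃ q, aeval s q = x from
    fun x => (hD x).elim fun n hn => this n x hn
  intro n
  induction n with
  | zero => exact fun x hx => ⟨0, by rw [map_zero, ← hx]; rfl⟩
  | succ n ih =>
    intro x hx
    obtain ⟨p, hp⟩ := ih (D x) (by rwa [← Function.iterate_succ_apply])
    obtain ⟨q, rfl⟩ := derivative_surjective_of_charZero (K := K) p
    have hc : x - aeval s q ∈ D.kerSubalgebra := by
      show D (x - aeval s q) = 0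
      rw [map_sub, apply_aeval_kerSubalgebra, hs, mul_one, hp, sub_self]
    exact ⟨q + C ⟨_, hc⟩, by rw [map_add, aeval_C]; exact add_sub_cancel _ _⟩

/-- The Slice Theorem. -/
theorem exists_algEquiv_polynomial_kerSubalgebra (hD : D.IsLocallyNilpotent) (hs : D s = 1) :
    ∃ e : L ≃ₐ[K] D.kerSubalgebra[X], e s = X := by
  let e := AlgEquiv.ofBijective ((aeval s).restrictScalars K)
    ⟨D.aeval_kerSubalgebra_injective hs, D.aeval_kerSubalgebra_surjective hD hs⟩
  exact ⟨e.symm, e.symm_apply_eq.2 (aeval_X s).symm⟩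

end Slice

theorem iterate_mul_of_apply_eq_zero {R A : Type*} [CommSemiring R] [CommSemiring A]
    [Algebra R A] (D : Derivation R A A) {c : A} (hc : D c = 0) (n : ℕ) (x : A) :
    (⇑D)^[n] (x * c) = (⇑D)^[n] x * c := by
  induction n generalizing x with
  | zero => rfl
  | succ n ih =>
    rw [Function.iterate_succ_apply, Function.iterate_succ_apply, leibniz, hc, smul_zero,
      zero_add, smul_eq_mul, mul_comm, ih]

section Extension

variable {R B L : Type*} [CommRing R] [CommRing B] [Algebra R B] [CommRing L] [Algebra R L]
  [Algebra B L] {d : Derivation R B B} {D : Derivation R L L} {h : B}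

theorem isLocallyNilpotent_of_isLocalizationAway [IsLocalization.Away h L]
    (hext : ∀ b, D (algebraMap B L b) = algebraMap B L (d b))
    (hd : d.IsLocallyNilpotent) (hh : d h = 0) : D.IsLocallyNilpotent := by
  intro x
  obtain ⟨k, b, hb⟩ := IsLocalization.Away.surj h x
  obtain ⟨n, hn⟩ := hd b
  refine ⟨n, ((IsLocalization.Away.algebraMap_isUnit h).pow k).mul_left_eq_zero.1 ?_⟩
  have hc : D (algebraMap B L h ^ k) = 0 := by
    rw [← map_pow, hext, leibniz_pow, hh, smul_zero, smul_zero, map_zero]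
  rw [← iterate_mul_of_apply_eq_zero D hc, hb,
    ← (Function.Semiconj.iterate_right (fun b => (hext b).symm) n) b, hn, map_zero]

theorem apply_algebraMap_mul_eq_one {f : B} {u : L}
    (hext : ∀ b, D (algebraMap B L b) = algebraMap B L (d b))
    (hu : algebraMap B L h * u = 1) (hh : d h = 0) (hf : d f = h) :
    D (algebraMap B L f * u) = 1 := by
  have hDu : D u = 0 := by
    rw [leibniz_of_mul_eq_one D ((mul_comm _ _).trans hu), hext, hh, map_zero, smul_zero]
  rw [leibniz, hDu, hext, hf, smul_zero, zero_add, smul_eq_mul, mul_comm, hu]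

end Extension

end Derivation

theorem slice_on_principal_localization_general {K B : Type*} [Field K] [CharZero K]
    [CommRing B] [Algebra K B]
    (d : Derivation K B B) (hLN : ∀ b : B, ∃ n : ℕ, (⇑d)^[n] b = 0)
    (h f : B) (hker : d h = 0) (hf : d f = h)
    (D : Derivation K (Localization.Away h) (Localization.Away h))
    (hext : ∀ b : B, D (algebraMap B (Localization.Away h) b) =
      algebraMap B (Localization.Away h) (d b)) :
    D (algebraMap B (Localization.Away h) f * Localization.Away.invSelf h) = 1 ∧
    ∃ e : Localization.Away h ≃ₐ[K] Polynomial ↥(D.kerSubalgebra),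
      e (algebraMap B (Localization.Away h) f * Localization.Away.invSelf h) =
        Polynomial.X := by
  have hinv : algebraMap B (Localization.Away h) h * Localization.Away.invSelf h = 1 := by
    rw [Localization.Away.invSelf, Localization.mk_eq_mk']
    exact IsLocalization.Away.mul_invSelf h
  have hs := Derivation.apply_algebraMap_mul_eq_one hext hinv hker hf
  exact ⟨hs, D.exists_algEquiv_polynomial_kerSubalgebra
    (Derivation.isLocallyNilpotent_of_isLocalizationAway hext hLN hker) hs⟩

/-- Let `B` be a finitely generated algebra over an algebraically closed field
`K` of characteristic zero, `d` a locally nilpotent derivation, and `h = d f ∈ pl(d)` with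
`d h = 0`.  Then in `B_h` the element `f/h` is a slice of the extension `D` of `d`, and
`B_h` is a polynomial ring in this slice over the kernel of `D` (Slice Theorem). -/
theorem slice_on_principal_localization {K B : Type*} [Field K] [CharZero K] [IsAlgClosed K]
    [CommRing B] [Algebra K B] [Algebra.FiniteType K B]
    (d : Derivation K B B) (hLN : ∀ b : B, ∃ n : ℕ, (⇑d)^[n] b = 0)
    (h f : B) (hker : d h = 0) (hf : d f = h)
    (D : Derivation K (Localization.Away h) (Localization.Away h))
    (hext : ∀ b : B, D (algebraMap B (Localization.Away h) b) =
      algebraMap B (Localization.Away h) (d b)) :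
    D (algebraMap B (Localization.Away h) f * Localization.Away.invSelf h) = 1 ∧
    ∃ e : Localization.Away h ≃ₐ[K] Polynomial ↥(D.kerSubalgebra),
      e (algebraMap B (Localization.Away h) f * Localization.Away.invSelf h) =
        Polynomial.X :=
  slice_on_principal_localization_general d hLN h f hker hf D hext
end

section
/- Let K be a field of characteristic zero, B a K-algebra, and ∂ a locally nilpotent K-derivation on B admitting a slice s (∂(s) = 1). Then B = Ker(∂)[s] and the map Ker(∂)[T] → B sending T to s is an isomorphism of Ker(∂)-algebras (Slice Theorem). -/
set_option synthInstance.maxHeartbeats 1000000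
set_option maxHeartbeats 1000000
set_option linter.unusedSectionVars false
open Polynomial


section Aux
variable {K B : Type*} [Field K] [CharZero K] [CommRing B] [Algebra K B]

lemma amap_eq (D : Derivation K B B) (a : ↥D.kerSubalgebra) :
    algebraMap ↥D.kerSubalgebra B a = (a : B) := rfl

lemma aeval_deriv (D : Derivation K B B) (s : B) (hs : D s = 1)
    (p : Polynomial ↥(D.kerSubalgebra)) :
    D (aeval s p) = aeval s (derivative p) := by
  induction p using Polynomial.induction_on with
  | C a => rw [aeval_C, amap_eq, derivative_C, map_zero]; exact a.2
  | add p q hp hq => rw [derivative_add, map_add, map_add, map_add, hp, hq]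
  | monomial n a _ =>
    rw [derivative_C_mul_X_pow]
    simp only [map_mul, aeval_C, map_pow, aeval_X, amap_eq,
      Derivation.leibniz, Derivation.leibniz_pow, hs, smul_eq_mul, mul_one]
    have ha : D (a : B) = 0 := a.2
    rw [ha]
    push_cast
    ring

lemma tor {K B : Type*} [Field K] [CharZero K] [CommRing B] [Algebra K B]
    (n : ℕ) (b : B) (h : b * ((n:B) + 1) = 0) : b = 0 := by
  have h1 : ((n : B) + 1) = algebraMap K B ((n : K) + 1) := by push_cast; ring
  have h2 : ((n : K) + 1) ≠ 0 := by norm_cast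
  calc b = b * (algebraMap K B ((n:K)+1) * algebraMap K B ((n:K)+1)⁻¹) := by
          rw [← map_mul, mul_inv_cancel₀ h2, map_one, mul_one]
    _ = (b * ((n:B)+1)) * algebraMap K B ((n:K)+1)⁻¹ := by rw [h1]; ring
    _ = 0 := by rw [h]; ring

lemma aeval_inj (D : Derivation K B B) (s : B) (hs : D s = 1) :
    ∀ (n : ℕ) (p : Polynomial ↥(D.kerSubalgebra)), p.natDegree ≤ n →
      aeval s p = 0 → p = 0 := by
  intro n
  induction n with
  | zero =>
    intro p hdeg hp
    rw [Polynomial.eq_C_of_natDegree_le_zero hdeg] at hp ⊢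
    rw [aeval_C, amap_eq] at hp
    have h0 : p.coeff 0 = 0 := by exact_mod_cast hp
    rw [h0, map_zero]
  | succ n ih =>
    intro p hdeg hp
    have h1 : aeval s (derivative p) = 0 := by rw [← aeval_deriv D s hs, hp, map_zero]
    have hd0 : derivative p = 0 :=
      ih _ (le_trans (natDegree_derivative_le p) (by omega)) h1
    have hc : ∀ i, p.coeff (i+1) = 0 := by
      intro i
      have h2 := coeff_derivative p i
      rw [hd0, coeff_zero] at h2
      have h3 : (p.coeff (i+1) : B) * ((i : B) + 1) = 0 := by
        have h4 := congrArg (Subtype.val) h2.symm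
        push_cast at h4
        exact h4
      have h5 : (p.coeff (i+1) : B) = 0 := tor (K := K) i _ h3
      exact Subtype.ext h5
    have hdeg0 : p = C (p.coeff 0) := by
      ext i
      cases i with
      | zero => simp
      | succ j => simp [hc j, coeff_C]
    rw [hdeg0] at hp ⊢
    rw [aeval_C, amap_eq] at hp
    have h0 : p.coeff 0 = 0 := by exact_mod_cast hp
    rw [h0, map_zero]

lemma aux (D : Derivation K B B) (i : ℕ) (c : ↥D.kerSubalgebra) :
    (((i:K)+1)⁻¹ • c) * ((i+1 : ℕ) : ↥D.kerSubalgebra) = c := by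
  apply Subtype.ext
  push_cast
  have h1 : ((i:B)+1) = algebraMap K B ((i:K)+1) := by push_cast; simp
  rw [Algebra.smul_def, h1, mul_comm _ ((c:B)), mul_assoc, ← map_mul,
    inv_mul_cancel₀ (by norm_cast : ((i:K)+1) ≠ 0), map_one, mul_one]

lemma aeval_surj (D : Derivation K B B) (s : B) (hs : D s = 1) :
    ∀ (n : ℕ) (b : B), (⇑D)^[n] b = 0 → ∃ p : Polynomial ↥(D.kerSubalgebra), aeval s p = b := by
  intro n
  induction n with
  | zero => intro b hb; exact ⟨0, by simp at hb ⊢; exact hb.symm⟩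
  | succ n ih =>
    intro b hb
    rw [Function.iterate_succ_apply] at hb
    obtain ⟨q, hq⟩ := ih (D b) hb
    set P : Polynomial ↥(D.kerSubalgebra) :=
      ∑ i ∈ Finset.range (q.natDegree+1), C (((i:K)+1)⁻¹ • q.coeff i) * X^(i+1) with hPdef
    have hP : derivative P = q := by
      rw [hPdef, derivative_sum]
      have key : ∀ i ∈ Finset.range (q.natDegree+1),
          derivative (C (((i:K)+1)⁻¹ • q.coeff i) * X^(i+1)) = C (q.coeff i) * X^i := by
        intro i _
        rw [derivative_C_mul_X_pow]
        simp only [Nat.add_sub_cancel]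
        rw [aux D i (q.coeff i)]
      rw [Finset.sum_congr rfl key]
      conv_rhs => rw [q.as_sum_range' (q.natDegree+1) (Nat.lt_succ_self _)]
      simp [C_mul_X_pow_eq_monomial]
    have hker : D (b - aeval s P) = 0 := by
      rw [map_sub, aeval_deriv D s hs, hP, hq, sub_self]
    refine ⟨P + C ⟨b - aeval s P, hker⟩, ?_⟩
    rw [map_add, aeval_C, amap_eq]
    simp only
    ring

end Aux

/-- Slice Theorem: If `D` is a locally nilpotent `K`-derivation on a
`K`-algebra `B` (`K` of characteristic zero) admitting a slice `s` (`D s = 1`), then the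
evaluation map `Ker(D)[T] → B`, `T ↦ s`, is an isomorphism; in particular `B = Ker(D)[s]`. -/
theorem slice_theorem {K B : Type*} [Field K] [CharZero K] [CommRing B] [Algebra K B]
    (D : Derivation K B B) (hLN : ∀ b : B, ∃ n : ℕ, (⇑D)^[n] b = 0)
    (s : B) (hs : D s = 1) :
    Function.Bijective ⇑(Polynomial.aeval (R := ↥(D.kerSubalgebra)) (A := B) s) := by
  constructor
  · intro p q h
    have h0 : aeval s (p - q) = 0 := by rw [map_sub, h, sub_self]
    have := aeval_inj D s hs (p - q).natDegree (p - q) le_rfl h0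
    exact sub_eq_zero.mp this
  · intro b
    obtain ⟨n, hn⟩ := hLN b
    exact aeval_surj D s hs n b hn
end
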